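/- Let M be a compact connected metric space with more than one point, α ∈ (0,1], δ > 0 and κ > 0, and let m ≥ 1 be a constant such that every function g : M → ℝ with |g(x)−g(y)| ≤ C·d(x,y)^α whenever d(x,y) < δ satisfies |g(x)−g(y)| ≤ C·m·d(x,y)^α for all x,y ∈ M. Then for every λ̂ ∈ (0,1), all φ₁, φ₂ ∈ Λ_{λ̂·κ,δ} satisfy Θ_κ(φ₁,φ₂) ≤ 2·log((1+λ̂)/(1−λ̂)) + 2·log(1 + m·λ̂·κ·diam(M)^α); in particular the cone Λ_{λ̂·κ,δ} has finite diameter with respect to the projective metric Θ_κ of the cone Λ_{κ,δ}. -/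

import Mathlib

open MeasureTheory Real Set Filter Topology

/-- `g` satisfies the `(C, α)`-Hölder estimate on pairs of points at distance `< δ`. -/
def HolderOnBalls {M : Type*} [MetricSpace M] (α δ C : ℝ) (g : M → ℝ) : Prop :=
  ∀ x y : M, dist x y < δ → |g x - g y| ≤ C * dist x y ^ α

/-- `g` satisfies the global `(C, α)`-Hölder estimate. -/
def HolderBound {M : Type*} [MetricSpace M] (α C : ℝ) (g : M → ℝ) : Prop :=
  ∀ x y : M, |g x - g y| ≤ C * dist x y ^ α

/-- Membership in the cone `Λ_{κ,δ}`: `g` is continuous, positive, and its least local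
Hölder constant `|g|_{α,δ}` is at most `κ · inf g`. -/
def memCone {M : Type*} [MetricSpace M] (α δ κ : ℝ) (g : M → ℝ) : Prop :=
  Continuous g ∧ (∀ x, 0 < g x) ∧ HolderOnBalls α δ (κ * (⨅ x, g x)) g

/-- `A_κ(φ₁, φ₂) = sup { r > 0 : φ₂ - r·φ₁ ∈ Λ_{κ,δ} ∪ {0} }`. -/
noncomputable def coneA {M : Type*} [MetricSpace M] (α δ κ : ℝ) (φ₁ φ₂ : M → ℝ) : ℝ :=
  sSup {r : ℝ | 0 < r ∧
    (memCone α δ κ (fun x => φ₂ x - r * φ₁ x) ∨ ∀ x, φ₂ x - r * φ₁ x = 0)}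

/-- `B_κ(φ₁, φ₂) = inf { r > 0 : r·φ₁ - φ₂ ∈ Λ_{κ,δ} ∪ {0} }`. -/
noncomputable def coneB {M : Type*} [MetricSpace M] (α δ κ : ℝ) (φ₁ φ₂ : M → ℝ) : ℝ :=
  sInf {r : ℝ | 0 < r ∧
    (memCone α δ κ (fun x => r * φ₁ x - φ₂ x) ∨ ∀ x, r * φ₁ x - φ₂ x = 0)}

/-- The projective metric `Θ_κ(φ₁, φ₂) = log (B_κ(φ₁,φ₂) / A_κ(φ₁,φ₂))` of the cone
`Λ_{κ,δ}`. -/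
noncomputable def coneTheta {M : Type*} [MetricSpace M] (α δ κ : ℝ) (φ₁ φ₂ : M → ℝ) : ℝ :=
  Real.log (coneB α δ κ φ₁ φ₂ / coneA α δ κ φ₁ φ₂)

/-
The ratio of two elements of `Λ_{λ̂κ,δ}` is squeezed between explicit constants. If `I = inf φ`,
then the global Hölder bound gives `φ ≤ Q · I` with `Q = 1 + m λ̂ κ (diam M)^α`. Hence
`r φ₁ - φ₂` stays above a positive multiple of `I₂` once `r ≥ (Q + λ̂) I₂ / ((1 - λ̂) I₁)`, and its
local Hölder constant, at most `λ̂κ (r I₁ + I₂)`, is then dominated by `κ` times its infimum,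
so `B_κ(φ₁,φ₂)` is at most this threshold; symmetrically `A_κ(φ₁,φ₂) ≥ (1 - λ̂) I₂ / ((Q + λ̂) I₁)`.
The two thresholds differ by the factor `((Q + λ̂)/(1 - λ̂))² ≤ ((1 + λ̂)/(1 - λ̂) · Q)²`.
-/

open Metric

section Development

variable {M : Type*} [MetricSpace M]

section Holder

variable {α δ C C₁ C₂ : ℝ} {f g : M → ℝ}

theorem HolderOnBalls.mono (h : HolderOnBalls α δ C₁ g) (hC : C₁ ≤ C₂) :
    HolderOnBalls α δ C₂ g := fun x y hxy =>
  (h x y hxy).trans (mul_le_mul_of_nonneg_right hC (Real.rpow_nonneg dist_nonneg α))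

theorem HolderOnBalls.const_mul (h : HolderOnBalls α δ C g) {a : ℝ} (ha : 0 ≤ a) :
    HolderOnBalls α δ (a * C) (fun x => a * g x) := fun x y hxy => by
  rw [← mul_sub, abs_mul, abs_of_nonneg ha, mul_assoc]
  exact mul_le_mul_of_nonneg_left (h x y hxy) ha

theorem HolderOnBalls.sub (hf : HolderOnBalls α δ C₁ f) (hg : HolderOnBalls α δ C₂ g) :
    HolderOnBalls α δ (C₁ + C₂) (fun x => f x - g x) := fun x y hxy =>
  calc |(f x - g x) - (f y - g y)| = |(f x - f y) - (g x - g y)| := by ring_nf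
    _ ≤ |f x - f y| + |g x - g y| := abs_sub _ _
    _ ≤ C₁ * dist x y ^ α + C₂ * dist x y ^ α := add_le_add (hf x y hxy) (hg x y hxy)
    _ = (C₁ + C₂) * dist x y ^ α := by ring

end Holder

section Compact

variable [CompactSpace M] {g : M → ℝ}

theorem Continuous.iInf_le (hg : Continuous g) (x : M) : ⨅ y, g y ≤ g x :=
  ciInf_le (isCompact_range hg).bddBelow x

variable [Nonempty M]

theorem Continuous.exists_eq_iInf (hg : Continuous g) : ∃ x₀, g x₀ = ⨅ x, g x :=
  (isCompact_range hg).sInf_mem (range_nonempty g)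

theorem Continuous.iInf_pos (hg : Continuous g) (hpos : ∀ x, 0 < g x) : 0 < ⨅ x, g x := by
  obtain ⟨x₀, hx₀⟩ := hg.exists_eq_iInf
  exact hx₀ ▸ hpos x₀

theorem Continuous.le_iInf_add_of_holderBound (hg : Continuous g) {α C : ℝ} (hα : 0 ≤ α)
    (hC : 0 ≤ C) (h : HolderBound α C g) (x : M) :
    g x ≤ (⨅ y, g y) + C * diam (univ : Set M) ^ α := by
  obtain ⟨x₀, hx₀⟩ := hg.exists_eq_iInf
  have hdist : dist x x₀ ^ α ≤ diam (univ : Set M) ^ α :=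
    Real.rpow_le_rpow dist_nonneg
      (dist_le_diam_of_mem isCompact_univ.isBounded (mem_univ x) (mem_univ x₀)) hα
  have := (abs_le.1 (h x x₀)).2
  nlinarith [mul_le_mul_of_nonneg_left hdist hC]

end Compact

section Cone

variable {α δ κ : ℝ}

theorem memCone.continuous {g : M → ℝ} (h : memCone α δ κ g) : Continuous g := h.1

theorem memCone.pos {g : M → ℝ} (h : memCone α δ κ g) (x : M) : 0 < g x := h.2.1 x

theorem memCone.holderOnBalls {g : M → ℝ} (h : memCone α δ κ g) :
    HolderOnBalls α δ (κ * ⨅ x, g x) g := h.2.2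

theorem memCone_of_le [Nonempty M] {g : M → ℝ} (hg : Continuous g) {c C : ℝ} (hc : 0 < c)
    (hlow : ∀ x, c ≤ g x) (hH : HolderOnBalls α δ C g) (hκ : 0 ≤ κ) (hC : C ≤ κ * c) :
    memCone α δ κ g :=
  ⟨hg, fun x => hc.trans_le (hlow x),
    hH.mono (hC.trans (mul_le_mul_of_nonneg_left (le_ciInf hlow) hκ))⟩

theorem nonneg_of_memCone_or_eq_zero {g : M → ℝ} (h : memCone α δ κ g ∨ ∀ x, g x = 0)
    (x : M) : 0 ≤ g x := by
  rcases h with h | h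
  · exact (h.pos x).le
  · exact (h x).ge

theorem memCone.le_mul_iInf [CompactSpace M] [Nonempty M] {m : ℝ}
    (hmδ : ∀ (C : ℝ) (g : M → ℝ), 0 ≤ C → HolderOnBalls α δ C g → HolderBound α (C * m) g)
    (hα : 0 ≤ α) (hκ : 0 ≤ κ) (hm : 0 ≤ m) {φ : M → ℝ} (hφ : memCone α δ κ φ) (x : M) :
    φ x ≤ (1 + m * κ * diam (univ : Set M) ^ α) * ⨅ y, φ y := by
  have hI := (hφ.continuous.iInf_pos hφ.pos).le
  have := hφ.continuous.le_iInf_add_of_holderBound hα (by positivity)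
    (hmδ _ φ (by positivity) hφ.holderOnBalls) x
  linarith

theorem memCone.sub_of_le [Nonempty M] [CompactSpace M] {lam Q a b : ℝ} {u v : M → ℝ}
    (hu : memCone α δ (lam * κ) u) (hv : memCone α δ (lam * κ) v)
    (hvQ : ∀ x, v x ≤ Q * ⨅ y, v y) (hκ : 0 ≤ κ) (hlam : 0 < lam) (ha : 0 < a) (hb : 0 < b)
    (hab : (Q + lam) * (b * ⨅ y, v y) ≤ (1 - lam) * (a * ⨅ y, u y)) :
    memCone α δ κ (fun x => a * u x - b * v x) := by
  set Iu := ⨅ y, u y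
  set Iv := ⨅ y, v y
  have hIu : 0 < Iu := hu.continuous.iInf_pos hu.pos
  have hIv : 0 < Iv := hv.continuous.iInf_pos hv.pos
  have hlow : ∀ x, a * Iu - b * (Q * Iv) ≤ a * u x - b * v x := fun x => by
    have := mul_le_mul_of_nonneg_left (hu.continuous.iInf_le x) ha.le
    have := mul_le_mul_of_nonneg_left (hvQ x) hb.le
    linarith
  have hmargin : lam * (a * Iu + b * Iv) ≤ a * Iu - b * (Q * Iv) := by linarith
  have hmargin_pos : 0 < lam * (a * Iu + b * Iv) := by positivity
  refine memCone_of_le ((continuous_const.mul hu.continuous).sub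
    (continuous_const.mul hv.continuous)) (hmargin_pos.trans_le hmargin) hlow
    ((hu.holderOnBalls.const_mul ha.le).sub (hv.holderOnBalls.const_mul hb.le)) hκ ?_
  calc a * (lam * κ * Iu) + b * (lam * κ * Iv) = κ * (lam * (a * Iu + b * Iv)) := by ring
    _ ≤ κ * (a * Iu - b * (Q * Iv)) := mul_le_mul_of_nonneg_left hmargin hκ

end Cone

section ProjectiveMetric

variable {α δ κ : ℝ} {φ₁ φ₂ : M → ℝ}

theorem le_coneA {z : M} (hφ₁ : 0 < φ₁ z) {r : ℝ} (hr : 0 < r)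
    (hmem : memCone α δ κ (fun x => φ₂ x - r * φ₁ x)) : r ≤ coneA α δ κ φ₁ φ₂ := by
  refine le_csSup ⟨φ₂ z / φ₁ z, ?_⟩ ⟨hr, Or.inl hmem⟩
  rintro s ⟨-, hs⟩
  have := nonneg_of_memCone_or_eq_zero hs z
  rw [le_div_iff₀ hφ₁]
  linarith

theorem coneB_le {r : ℝ} (hr : 0 < r) (hmem : memCone α δ κ (fun x => r * φ₁ x - φ₂ x)) :
    coneB α δ κ φ₁ φ₂ ≤ r :=
  csInf_le ⟨0, fun _ hs => hs.1.le⟩ ⟨hr, Or.inl hmem⟩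

theorem div_le_coneB {z : M} (hφ₁ : 0 < φ₁ z) {r : ℝ} (hr : 0 < r)
    (hmem : memCone α δ κ (fun x => r * φ₁ x - φ₂ x)) :
    φ₂ z / φ₁ z ≤ coneB α δ κ φ₁ φ₂ := by
  refine le_csInf ⟨r, hr, Or.inl hmem⟩ ?_
  rintro s ⟨-, hs⟩
  have := nonneg_of_memCone_or_eq_zero hs z
  rw [div_le_iff₀ hφ₁]
  linarith

theorem coneTheta_le_log_div [Nonempty M] (hφ₁ : ∀ x, 0 < φ₁ x) (hφ₂ : ∀ x, 0 < φ₂ x)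
    {r₀ r₁ : ℝ} (hr₀ : 0 < r₀) (hr₁ : 0 < r₁)
    (hA : memCone α δ κ (fun x => φ₂ x - r₀ * φ₁ x))
    (hB : memCone α δ κ (fun x => r₁ * φ₁ x - φ₂ x)) :
    coneTheta α δ κ φ₁ φ₂ ≤ Real.log (r₁ / r₀) := by
  obtain ⟨z⟩ := ‹Nonempty M›
  have hBpos : 0 < coneB α δ κ φ₁ φ₂ :=
    (div_pos (hφ₂ z) (hφ₁ z)).trans_le (div_le_coneB (hφ₁ z) hr₁ hB)
  have hA' := le_coneA (hφ₁ z) hr₀ hA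
  exact Real.log_le_log (div_pos hBpos (hr₀.trans_le hA'))
    (div_le_div₀ hr₁.le (coneB_le hr₁ hB) hr₀ hA')

end ProjectiveMetric

theorem log_sq_div_le {Q lam : ℝ} (hQ : 1 ≤ Q) (hlam0 : 0 ≤ lam) (hlam1 : lam < 1) :
    Real.log (((Q + lam) / (1 - lam)) ^ 2) ≤
      2 * Real.log ((1 + lam) / (1 - lam)) + 2 * Real.log Q := by
  have h1 : 0 < 1 - lam := by linarith
  have hle : (Q + lam) / (1 - lam) ≤ (1 + lam) / (1 - lam) * Q := by
    rw [div_mul_eq_mul_div]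
    gcongr
    nlinarith
  calc Real.log (((Q + lam) / (1 - lam)) ^ 2)
      ≤ Real.log (((1 + lam) / (1 - lam) * Q) ^ 2) :=
        Real.log_le_log (by positivity) (by gcongr)
    _ = 2 * Real.log ((1 + lam) / (1 - lam)) + 2 * Real.log Q := by
        rw [Real.log_pow, Real.log_mul (by positivity) (by positivity)]
        push_cast
        ring

end Development

theorem cone_finite_diameter_general
    {M : Type*} [MetricSpace M] [CompactSpace M] [Nontrivial M]
    (α δ κ m : ℝ) (hα0 : 0 < α) (hκ0 : 0 < κ)
    (hm : 1 ≤ m)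
    (hmδ : ∀ (C : ℝ) (g : M → ℝ), 0 ≤ C → HolderOnBalls α δ C g → HolderBound α (C * m) g)
    (lamhat : ℝ) (hl0 : 0 < lamhat) (hl1 : lamhat < 1)
    (φ₁ φ₂ : M → ℝ)
    (hφ₁ : memCone α δ (lamhat * κ) φ₁) (hφ₂ : memCone α δ (lamhat * κ) φ₂) :
    coneTheta α δ κ φ₁ φ₂ ≤
      2 * Real.log ((1 + lamhat) / (1 - lamhat)) +
        2 * Real.log (1 + m * lamhat * κ * Metric.diam (Set.univ : Set M) ^ α) := by
  set Q := 1 + m * lamhat * κ * diam (univ : Set M) ^ α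
  have hQ : 1 ≤ Q := le_add_of_nonneg_right (by positivity)
  have hφQ : ∀ {φ}, memCone α δ (lamhat * κ) φ → ∀ x, φ x ≤ Q * ⨅ y, φ y := fun hφ x => by
    simpa only [Q, mul_assoc] using hφ.le_mul_iInf hmδ hα0.le (by positivity) (by linarith) x
  have hI₁ : 0 < ⨅ y, φ₁ y := hφ₁.continuous.iInf_pos hφ₁.pos
  have hI₂ : 0 < ⨅ y, φ₂ y := hφ₂.continuous.iInf_pos hφ₂.pos
  have hl1' : 0 < 1 - lamhat := by linarith
  set r₀ := (1 - lamhat) * (⨅ y, φ₂ y) / ((Q + lamhat) * ⨅ y, φ₁ y)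
  set r₁ := (Q + lamhat) * (⨅ y, φ₂ y) / ((1 - lamhat) * ⨅ y, φ₁ y)
  have hA : memCone α δ κ (fun x => φ₂ x - r₀ * φ₁ x) := by
    simpa only [one_mul] using hφ₂.sub_of_le hφ₁ (hφQ hφ₁) hκ0.le hl0 one_pos
      (by positivity : 0 < r₀) (le_of_eq (by simp only [r₀]; field_simp))
  have hB : memCone α δ κ (fun x => r₁ * φ₁ x - φ₂ x) := by
    simpa only [one_mul] using hφ₁.sub_of_le hφ₂ (hφQ hφ₂) hκ0.le hl0
      (by positivity : 0 < r₁) one_pos (le_of_eq (by simp only [r₁]; field_simp))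
  calc coneTheta α δ κ φ₁ φ₂
      ≤ Real.log (r₁ / r₀) :=
        coneTheta_le_log_div hφ₁.pos hφ₂.pos (by positivity) (by positivity) hA hB
    _ = Real.log (((Q + lamhat) / (1 - lamhat)) ^ 2) := by
        congr 1
        simp only [r₀, r₁]
        field_simp
    _ ≤ _ := log_sq_div_le hQ hl0.le hl1

/-- Proposition (finite projective diameter): for `λ̂ ∈ (0,1)`, any
`φ₁, φ₂ ∈ Λ_{λ̂κ,δ}` satisfy
`Θ_κ(φ₁,φ₂) ≤ 2 log((1+λ̂)/(1-λ̂)) + 2 log(1 + m λ̂ κ (diam M)^α)`;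
in particular `Λ_{λ̂κ,δ}` has finite `Θ_κ`-diameter. -/
theorem cone_finite_diameter
    {M : Type*} [MetricSpace M] [CompactSpace M] [ConnectedSpace M] [Nontrivial M]
    (α δ κ m : ℝ) (hα0 : 0 < α) (hα1 : α ≤ 1) (hδ0 : 0 < δ) (hκ0 : 0 < κ)
    (hm : 1 ≤ m)
    (hmδ : ∀ (C : ℝ) (g : M → ℝ), 0 ≤ C → HolderOnBalls α δ C g → HolderBound α (C * m) g)
    (lamhat : ℝ) (hl0 : 0 < lamhat) (hl1 : lamhat < 1)
    (φ₁ φ₂ : M → ℝ)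
    (hφ₁ : memCone α δ (lamhat * κ) φ₁) (hφ₂ : memCone α δ (lamhat * κ) φ₂) :
    coneTheta α δ κ φ₁ φ₂ ≤
      2 * Real.log ((1 + lamhat) / (1 - lamhat)) +
        2 * Real.log (1 + m * lamhat * κ * Metric.diam (Set.univ : Set M) ^ α) :=
  cone_finite_diameter_general α δ κ m hα0 hκ0 hm hmδ lamhat hl0 hl1 φ₁ φ₂ hφ₁ hφ₂
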